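/- arXiv:1903.05465 — 2 statements merged into one kernel-verified Lean document; each statement's English description precedes it below -/
import Mathlib

section
/- Assume: for k = 1,2 there are constants M_k > 0, δ_k > 0 and C's such that C0_k·⟨x⟩^{2(M_k+1)} − C1_k ≤ V_k(t,x) ≤ C2_k·⟨x⟩^{2(M_k+1)} with C0_k, C2_k > 0, and |A^{(k)}(t,x)| ≤ C·⟨x⟩^{M_k+1−δ_k}; and that |W12(t,x)| ≤ C·⟨x⟩^{2(M0+1)−δ} with δ > 0, where M0 = min(M1,M2). Then there exist constants μ* ≥ 0 and C0* > 0 such that for all t ∈ [0,T], z = (x^{(1)},x^{(2)},x^{(3)},x^{(4)}) ∈ ℝ^{4d} and ζ = (ξ^{(1)},ξ^{(2)},ξ^{(3)},ξ^{(4)}) ∈ ℝ^{4d}: μ* + ĥ(t,z,ζ) ≥ C0*·(⟨ζ⟩² + Φ(z)²). (Estimate (5.5-2) of Lemma 5.1.) -/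
/-!
Every summand of `ĥ` controls its own share of `⟨ζ⟩² + Φ²` up to an additive constant. For the
magnetic particles, `|ξ|² ≤ 2|ξ - A|² + 2|A|²` and `|A|² = O(⟨x⟩^{2(M+1-δ)})`, which half of the
confining potential `V ≳ ⟨x⟩^{2(M+1)}` absorbs because a lower power of `⟨x⟩ ≥ 1` is at most
`ε` times a higher one plus a constant. The pair potential is handled the same way after
`⟨x⁽¹⁾ - x⁽²⁾⟩^r ≤ 2^r (⟨x⁽¹⁾⟩^r + ⟨x⁽²⁾⟩^r)`, using another quarter of `V₁` and of `V₂`.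
What remains bounds `ĥ` from below by positive multiples of `|ξ⁽ᵏ⁾|²` and `q_k²`, where
`Φ = Σ q_k`, minus a constant, and `Φ² ≤ 4 Σ q_k²`.
-/

noncomputable section
open Real Set

/-- The Japanese bracket `⟨x⟩ = (1 + ‖x‖²)^{1/2}`. -/
def jap {E : Type*} [NormedAddCommGroup E] (x : E) : ℝ := Real.sqrt (1 + ‖x‖ ^ 2)

theorem add_rpow_le_two_rpow_mul {s t r : ℝ} (hs : 0 ≤ s) (ht : 0 ≤ t) (hr : 0 ≤ r) :
    (s + t) ^ r ≤ 2 ^ r * (s ^ r + t ^ r) := by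
  have hmax : s + t ≤ 2 * max s t := by linarith [le_max_left s t, le_max_right s t]
  calc (s + t) ^ r ≤ (2 * max s t) ^ r := rpow_le_rpow (by positivity) hmax hr
    _ = 2 ^ r * max s t ^ r := mul_rpow zero_le_two (hs.trans (le_max_left s t))
    _ ≤ 2 ^ r * (s ^ r + t ^ r) := by
      gcongr
      rcases max_choice s t with h | h <;> rw [h] <;>
        linarith [rpow_nonneg hs r, rpow_nonneg ht r]

theorem exists_mul_rpow_le_mul_rpow_add {a b ε : ℝ} (K : ℝ) (hba : b < a) (hε : 0 < ε) :
    ∃ C, ∀ y : ℝ, 1 ≤ y → K * y ^ b ≤ ε * y ^ a + C := by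
  refine ⟨|K| * max 1 ((K / ε) ^ (b / (a - b))), fun y hy => ?_⟩
  have hy0 : 0 < y := one_pos.trans_le hy
  have hsplit : y ^ a = y ^ (a - b) * y ^ b := by rw [← rpow_add hy0]; ring_nf
  have hyb : 0 < y ^ b := rpow_pos_of_pos hy0 b
  have hyab : 0 < y ^ (a - b) := rpow_pos_of_pos hy0 _
  rcases le_or_gt K (ε * y ^ (a - b)) with hK | hK
  · calc K * y ^ b ≤ ε * y ^ (a - b) * y ^ b := mul_le_mul_of_nonneg_right hK hyb.le
      _ = ε * y ^ a := by rw [hsplit, mul_assoc]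
      _ ≤ _ := le_add_of_nonneg_right (by positivity)
  have hK0 : 0 < K := (mul_pos hε hyab).trans hK
  -- otherwise `y ^ (a - b) < K / ε`, which bounds `y ^ b`
  have hbound : y ^ b ≤ max 1 ((K / ε) ^ (b / (a - b))) := by
    rcases le_or_gt b 0 with hb | hb
    · exact (rpow_le_one_of_one_le_of_nonpos hy hb).trans (le_max_left _ _)
    have hlt : y ^ (a - b) < K / ε := by rwa [lt_div_iff₀ hε, mul_comm]
    calc y ^ b = (y ^ (a - b)) ^ (b / (a - b)) := by
          rw [← rpow_mul hy0.le]; congr 1; field_simp [(sub_pos.2 hba).ne']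
      _ ≤ (K / ε) ^ (b / (a - b)) :=
          rpow_le_rpow hyab.le hlt.le (div_nonneg hb.le (sub_pos.2 hba).le)
      _ ≤ _ := le_max_right _ _
  rw [abs_of_pos hK0]
  calc K * y ^ b ≤ K * max 1 ((K / ε) ^ (b / (a - b))) := by gcongr
    _ ≤ _ := le_add_of_nonneg_left (by positivity)

theorem exists_pos_mul_one_add_sum_sq_le {ι : Type*} [Fintype ι] (α β : ι → ℝ)
    (hα : ∀ k, 0 < α k) (hβ : ∀ k, 0 < β k) :
    ∃ c > 0, ∀ p q : ι → ℝ, c * (1 + ∑ k, p k ^ 2 + (∑ k, q k) ^ 2)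
      ≤ c + ∑ k, (α k * p k ^ 2 + β k * q k ^ 2) := by
  set n : ℝ := (Fintype.card ι : ℝ)
  set S := ∑ k, ((α k)⁻¹ + n * (β k)⁻¹)
  have hn : 0 ≤ n := Nat.cast_nonneg _
  have hterm : ∀ k, (α k)⁻¹ + n * (β k)⁻¹ ≤ 1 + S := fun k => by
    have := Finset.single_le_sum (f := fun k => (α k)⁻¹ + n * (β k)⁻¹)
      (fun k _ => by have := hα k; have := hβ k; positivity) (Finset.mem_univ k)
    linarith
  have hS : 0 < 1 + S := by
    have : 0 ≤ S := Finset.sum_nonneg fun k _ => by have := hα k; have := hβ k; positivity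
    linarith
  -- `(1 + S)⁻¹` lies below every `α k` and every `β k / n`; the factor `n` pays for
  -- Cauchy–Schwarz `(∑ q)² ≤ n ∑ q²`
  refine ⟨(1 + S)⁻¹, inv_pos.2 hS, fun p q => ?_⟩
  have hcα : ∀ k, (1 + S)⁻¹ ≤ α k := fun k => by
    have : 0 ≤ n * (β k)⁻¹ := mul_nonneg hn (inv_pos.2 (hβ k)).le
    exact inv_le_of_inv_le₀ (hα k) (by linarith [hterm k])
  have hcβ : ∀ k, (1 + S)⁻¹ * n ≤ β k := fun k => by
    have h := mul_le_mul_of_nonneg_left (show n * (β k)⁻¹ ≤ 1 + S by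
      linarith [hterm k, inv_pos.2 (hα k)]) (hβ k).le
    rw [mul_left_comm, mul_inv_cancel₀ (hβ k).ne', mul_one] at h
    rwa [← div_eq_inv_mul, div_le_iff₀ hS]
  have hCS : (1 + S)⁻¹ * (∑ k, q k) ^ 2 ≤ ∑ k, (1 + S)⁻¹ * n * q k ^ 2 := by
    rw [← Finset.mul_sum, mul_assoc]
    gcongr
    simpa [n] using sq_sum_le_card_mul_sum_sq (s := Finset.univ) (f := q)
  have hpα : ∑ k, (1 + S)⁻¹ * p k ^ 2 ≤ ∑ k, α k * p k ^ 2 :=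
    Finset.sum_le_sum fun k _ => by gcongr; exact hcα k
  have hqβ : ∑ k, (1 + S)⁻¹ * n * q k ^ 2 ≤ ∑ k, β k * q k ^ 2 :=
    Finset.sum_le_sum fun k _ => by gcongr; exact hcβ k
  rw [← Finset.mul_sum] at hpα
  rw [Finset.sum_add_distrib]
  linarith

section

variable {E : Type*} [NormedAddCommGroup E]

theorem one_le_jap (x : E) : 1 ≤ jap x :=
  one_le_sqrt.2 (le_add_of_nonneg_right (sq_nonneg _))

theorem jap_pos (x : E) : 0 < jap x :=
  one_pos.trans_le (one_le_jap x)

theorem sq_jap (x : E) : jap x ^ 2 = 1 + ‖x‖ ^ 2 :=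
  sq_sqrt (by positivity)

theorem norm_le_jap (x : E) : ‖x‖ ≤ jap x :=
  (le_sqrt (norm_nonneg x) (by positivity)).2 (le_add_of_nonneg_left zero_le_one)

theorem jap_rpow_sq (x : E) (s : ℝ) : (jap x ^ s) ^ 2 = jap x ^ (2 * s) := by
  rw [sq, ← rpow_add (jap_pos x), two_mul]

theorem jap_sub_le (x y : E) : jap (x - y) ≤ jap x + jap y := by
  refine (sqrt_le_left (by linarith [jap_pos x, jap_pos y])).2 ?_
  nlinarith [sq_jap x, sq_jap y, norm_sub_le x y, norm_le_jap x, norm_le_jap y,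
    norm_nonneg (x - y), mul_le_mul (norm_le_jap x) (norm_le_jap y) (norm_nonneg y)
      (jap_pos x).le]

theorem jap_sub_rpow_le (x y : E) {r : ℝ} (hr : 0 ≤ r) :
    jap (x - y) ^ r ≤ 2 ^ r * (jap x ^ r + jap y ^ r) :=
  (rpow_le_rpow (jap_pos _).le (jap_sub_le x y) hr).trans
    (add_rpow_le_two_rpow_mul (jap_pos x).le (jap_pos y).le hr)

theorem exists_magnetic_hamiltonian_lower_bound {m C0 C1 CA s e : ℝ} (hm : 0 < m)
    (hC0 : 0 < C0) (he : e < s) :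
    ∃ K, ∀ (x ξ A : E) (V : ℝ), C0 * jap x ^ (2 * s) - C1 ≤ V →
      ‖A‖ ≤ CA * jap x ^ e →
      1 / (4 * m) * ‖ξ‖ ^ 2 + C0 / 2 * jap x ^ (2 * s) - K
        ≤ 1 / (2 * m) * ‖ξ - A‖ ^ 2 + V := by
  obtain ⟨K, hK⟩ :=
    exists_mul_rpow_le_mul_rpow_add (CA ^ 2 / (2 * m)) (by linarith : 2 * e < 2 * s) (half_pos hC0)
  refine ⟨K + C1, fun x ξ A V hV hA => ?_⟩
  have hξ : ‖ξ‖ ^ 2 ≤ 2 * (‖ξ - A‖ ^ 2 + ‖A‖ ^ 2) :=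
    (pow_le_pow_left₀ (norm_nonneg ξ) (norm_le_norm_sub_add ξ A) 2).trans add_sq_le
  have hA2 : ‖A‖ ^ 2 ≤ CA ^ 2 * jap x ^ (2 * e) := by
    rw [← jap_rpow_sq, ← mul_pow]
    exact pow_le_pow_left₀ (norm_nonneg A) hA 2
  have hAm : 1 / (2 * m) * ‖A‖ ^ 2 ≤ CA ^ 2 / (2 * m) * jap x ^ (2 * e) := by
    rw [div_mul_eq_mul_div, one_mul, div_mul_eq_mul_div]
    gcongr
  have hξm : 1 / (4 * m) * ‖ξ‖ ^ 2 ≤ 1 / (2 * m) * ‖ξ - A‖ ^ 2 + 1 / (2 * m) * ‖A‖ ^ 2 :=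
    calc 1 / (4 * m) * ‖ξ‖ ^ 2 ≤ 1 / (4 * m) * (2 * (‖ξ - A‖ ^ 2 + ‖A‖ ^ 2)) := by gcongr
      _ = _ := by ring
  linarith [hK _ (one_le_jap x)]

theorem exists_pair_potential_bound {CW e a₁ a₂ η₁ η₂ : ℝ}
    (ha₁ : 0 < a₁) (ha₂ : 0 < a₂) (he₁ : e < a₁) (he₂ : e < a₂) (hη₁ : 0 < η₁) (hη₂ : 0 < η₂) :
    ∃ K, ∀ (x₁ x₂ : E) (W : ℝ), |W| ≤ CW * jap (x₁ - x₂) ^ e →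
      |W| ≤ η₁ * jap x₁ ^ a₁ + η₂ * jap x₂ ^ a₂ + K := by
  set r := max e 0
  obtain ⟨K₁, hK₁⟩ :=
    exists_mul_rpow_le_mul_rpow_add (CW * 2 ^ r) (max_lt he₁ ha₁) hη₁
  obtain ⟨K₂, hK₂⟩ :=
    exists_mul_rpow_le_mul_rpow_add (CW * 2 ^ r) (max_lt he₂ ha₂) hη₂
  refine ⟨K₁ + K₂, fun x₁ x₂ W hW => ?_⟩
  have hCW : 0 ≤ CW :=
    nonneg_of_mul_nonneg_left ((abs_nonneg W).trans hW) (rpow_pos_of_pos (jap_pos _) e)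
  have hr : jap (x₁ - x₂) ^ e ≤ 2 ^ r * (jap x₁ ^ r + jap x₂ ^ r) :=
    (rpow_le_rpow_of_exponent_le (one_le_jap _) (le_max_left e 0)).trans
      (jap_sub_rpow_le x₁ x₂ (le_max_right e 0))
  nlinarith [mul_le_mul_of_nonneg_left hr hCW, hK₁ _ (one_le_jap x₁), hK₂ _ (one_le_jap x₂)]

end

theorem stmt7_general (d : ℕ) (T m1 m2 m3 m4 : ℝ)
    (hm1 : 0 < m1) (hm2 : 0 < m2) (hm3 : 0 < m3) (hm4 : 0 < m4)
    (M1 M2 δ1 δ2 δ : ℝ) (hM1 : 0 < M1) (hM2 : 0 < M2)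
    (hδ1 : 0 < δ1) (hδ2 : 0 < δ2) (hδ : 0 < δ)
    (V1 V2 : ℝ → EuclideanSpace ℝ (Fin d) → ℝ)
    (A1 A2 : ℝ → EuclideanSpace ℝ (Fin d) → EuclideanSpace ℝ (Fin d))
    (W12 : ℝ → EuclideanSpace ℝ (Fin d) → ℝ)
    (C01 C11 C02 C12 CA CW : ℝ)
    (hC01 : 0 < C01) (hC02 : 0 < C02)
    (hV1low : ∀ t ∈ Icc (0:ℝ) T, ∀ x, C01 * jap x ^ (2*(M1+1)) - C11 ≤ V1 t x)
    (hV2low : ∀ t ∈ Icc (0:ℝ) T, ∀ x, C02 * jap x ^ (2*(M2+1)) - C12 ≤ V2 t x)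
    (hA1 : ∀ t ∈ Icc (0:ℝ) T, ∀ x, ‖A1 t x‖ ≤ CA * jap x ^ (M1+1-δ1))
    (hA2 : ∀ t ∈ Icc (0:ℝ) T, ∀ x, ‖A2 t x‖ ≤ CA * jap x ^ (M2+1-δ2))
    (hW12 : ∀ t ∈ Icc (0:ℝ) T, ∀ x, |W12 t x| ≤ CW * jap x ^ (2*(min M1 M2 + 1) - δ)) :
    ∃ μs C0s : ℝ, 0 ≤ μs ∧ 0 < C0s ∧
      ∀ t ∈ Icc (0:ℝ) T, ∀ x1 x2 x3 x4 ξ1 ξ2 ξ3 ξ4 : EuclideanSpace ℝ (Fin d),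
        C0s * ((1 + ‖ξ1‖^2 + ‖ξ2‖^2 + ‖ξ3‖^2 + ‖ξ4‖^2)
            + (jap x1 ^ (M1+1) + jap x2 ^ (M2+1) + jap x3 + jap x4) ^ 2)
          ≤ μs + (((1/(2*m1)) * ‖ξ1 - A1 t x1‖^2 + V1 t x1)
              + ((1/(2*m2)) * ‖ξ2 - A2 t x2‖^2 + V2 t x2)
              + W12 t (x1 - x2)
              + ((1/(2*m3)) * ‖ξ3‖^2 + jap x3 ^ 2)
              + ((1/(2*m4)) * ‖ξ4‖^2 + jap x4 ^ 2)) := by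
  obtain ⟨K₁, hK₁⟩ := exists_magnetic_hamiltonian_lower_bound
    (E := EuclideanSpace ℝ (Fin d)) (C1 := C11) (CA := CA) hm1 hC01 (sub_lt_self _ hδ1)
  obtain ⟨K₂, hK₂⟩ := exists_magnetic_hamiltonian_lower_bound
    (E := EuclideanSpace ℝ (Fin d)) (C1 := C12) (CA := CA) hm2 hC02 (sub_lt_self _ hδ2)
  obtain ⟨KW, hKW⟩ := exists_pair_potential_bound (E := EuclideanSpace ℝ (Fin d)) (CW := CW)
    (e := 2 * (min M1 M2 + 1) - δ) (a₁ := 2 * (M1 + 1)) (a₂ := 2 * (M2 + 1))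
    (by linarith) (by linarith) (by linarith [min_le_left M1 M2])
    (by linarith [min_le_right M1 M2]) (div_pos hC01 four_pos) (div_pos hC02 four_pos)
  obtain ⟨c, hc, hcoer⟩ := exists_pos_mul_one_add_sum_sq_le
    ![1 / (4 * m1), 1 / (4 * m2), 1 / (2 * m3), 1 / (2 * m4)] ![C01 / 4, C02 / 4, 1, 1]
    (fun k => by
      fin_cases k <;> simp only [Fin.zero_eta, Fin.mk_one, Fin.reduceFinMk, Fin.isValue,
        Matrix.cons_val_zero, Matrix.cons_val_one, Matrix.cons_val] <;> positivity)
    (fun k => by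
      fin_cases k <;> simp only [Fin.zero_eta, Fin.mk_one, Fin.reduceFinMk, Fin.isValue,
        Matrix.cons_val_zero, Matrix.cons_val_one, Matrix.cons_val] <;> positivity)
  refine ⟨max 0 (c + K₁ + K₂ + KW), c, le_max_left _ _, hc, ?_⟩
  intro t ht x1 x2 x3 x4 ξ1 ξ2 ξ3 ξ4
  have h₁ := hK₁ x1 ξ1 (A1 t x1) (V1 t x1) (hV1low t ht x1) (hA1 t ht x1)
  have h₂ := hK₂ x2 ξ2 (A2 t x2) (V2 t x2) (hV2low t ht x2) (hA2 t ht x2)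
  have hW := hKW x1 x2 (W12 t (x1 - x2)) (hW12 t ht (x1 - x2))
  have h := hcoer ![‖ξ1‖, ‖ξ2‖, ‖ξ3‖, ‖ξ4‖]
    ![jap x1 ^ (M1 + 1), jap x2 ^ (M2 + 1), jap x3, jap x4]
  simp only [Fin.sum_univ_four, Matrix.cons_val_zero, Matrix.cons_val_one, Matrix.cons_val,
    jap_rpow_sq] at h
  linarith [neg_abs_le (W12 t (x1 - x2)), le_max_right 0 (c + K₁ + K₂ + KW)]

/-- **Estimate (5.5-2) of Lemma 5.1.** Under the growth bounds on `V_k`, `A^{(k)}` (k = 1,2)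
and on `W12`, there are constants `μ* ≥ 0` and `C0* > 0` with
`μ* + ĥ(t,z,ζ) ≥ C0*·(⟨ζ⟩² + Φ(z)²)`, where
`ĥ(t,z,ζ) = Σ_{k=1,2} h_k(t,x^{(k)},ξ^{(k)}) + W12(t,x^{(1)}−x^{(2)}) + Σ_{k=3,4} l_k(x^{(k)},ξ^{(k)})`
and `Φ(z) = ⟨x^{(1)}⟩^{M1+1} + ⟨x^{(2)}⟩^{M2+1} + ⟨x^{(3)}⟩ + ⟨x^{(4)}⟩`. -/
theorem stmt7 (d : ℕ) (T m1 m2 m3 m4 : ℝ) (hT : 0 < T)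
    (hm1 : 0 < m1) (hm2 : 0 < m2) (hm3 : 0 < m3) (hm4 : 0 < m4)
    (M1 M2 δ1 δ2 δ : ℝ) (hM1 : 0 < M1) (hM2 : 0 < M2)
    (hδ1 : 0 < δ1) (hδ2 : 0 < δ2) (hδ : 0 < δ)
    (V1 V2 : ℝ → EuclideanSpace ℝ (Fin d) → ℝ)
    (A1 A2 : ℝ → EuclideanSpace ℝ (Fin d) → EuclideanSpace ℝ (Fin d))
    (W12 : ℝ → EuclideanSpace ℝ (Fin d) → ℝ)
    (C01 C11 C21 C02 C12 C22 CA CW : ℝ)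
    (hC01 : 0 < C01) (hC21 : 0 < C21) (hC02 : 0 < C02) (hC22 : 0 < C22)
    (hV1low : ∀ t ∈ Icc (0:ℝ) T, ∀ x, C01 * jap x ^ (2*(M1+1)) - C11 ≤ V1 t x)
    (hV1up : ∀ t ∈ Icc (0:ℝ) T, ∀ x, V1 t x ≤ C21 * jap x ^ (2*(M1+1)))
    (hV2low : ∀ t ∈ Icc (0:ℝ) T, ∀ x, C02 * jap x ^ (2*(M2+1)) - C12 ≤ V2 t x)
    (hV2up : ∀ t ∈ Icc (0:ℝ) T, ∀ x, V2 t x ≤ C22 * jap x ^ (2*(M2+1)))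
    (hA1 : ∀ t ∈ Icc (0:ℝ) T, ∀ x, ‖A1 t x‖ ≤ CA * jap x ^ (M1+1-δ1))
    (hA2 : ∀ t ∈ Icc (0:ℝ) T, ∀ x, ‖A2 t x‖ ≤ CA * jap x ^ (M2+1-δ2))
    (hW12 : ∀ t ∈ Icc (0:ℝ) T, ∀ x, |W12 t x| ≤ CW * jap x ^ (2*(min M1 M2 + 1) - δ)) :
    ∃ μs C0s : ℝ, 0 ≤ μs ∧ 0 < C0s ∧
      ∀ t ∈ Icc (0:ℝ) T, ∀ x1 x2 x3 x4 ξ1 ξ2 ξ3 ξ4 : EuclideanSpace ℝ (Fin d),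
        C0s * ((1 + ‖ξ1‖^2 + ‖ξ2‖^2 + ‖ξ3‖^2 + ‖ξ4‖^2)
            + (jap x1 ^ (M1+1) + jap x2 ^ (M2+1) + jap x3 + jap x4) ^ 2)
          ≤ μs + (((1/(2*m1)) * ‖ξ1 - A1 t x1‖^2 + V1 t x1)
              + ((1/(2*m2)) * ‖ξ2 - A2 t x2‖^2 + V2 t x2)
              + W12 t (x1 - x2)
              + ((1/(2*m3)) * ‖ξ3‖^2 + jap x3 ^ 2)
              + ((1/(2*m4)) * ‖ξ4‖^2 + jap x4 ^ 2)) :=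
  stmt7_general d T m1 m2 m3 m4 hm1 hm2 hm3 hm4 M1 M2 δ1 δ2 δ hM1 hM2 hδ1 hδ2 hδ V1 V2 A1 A2 W12 C01
    C11 C02 C12 CA CW hC01 hC02 hV1low hV2low hA1 hA2 hW12
end
end

section
/- Let T > 0, C ≥ 0, let g : [0,T] → [0,∞) be continuous, and let φ : [0,T] → [0,∞) be a function such that φ² is continuously differentiable on [0,T] and (φ²)'(t) ≤ 2C·(φ(t)² + g(t)·φ(t)) for all t ∈ [0,T]. Then for every t ∈ [0,T]: φ(t) ≤ e^{Ct}·φ(0) + C·∫₀ᵗ e^{C(t−θ)}·g(θ) dθ. (The regularized Gronwall argument deriving (4.11) from (4.10) in the proof of Proposition 4.3.) -/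
/-! Where `φ` vanishes, `φ = √(φ²)` need not be differentiable, so one works with the
regularization `ψ = √(φ² + ε²)` instead: it is positive, `ψ' = (φ²)'/(2ψ)`, and `|φ| ≤ ψ` turns
the hypothesis into the linear inequality `ψ' ≤ C (ψ + g)`. For this the integrating factor makes
`e^{-Cs} ψ(s) - C ∫₀ˢ e^{-Cθ} g(θ) dθ` antitone, which is the Gronwall bound for `ψ`; letting
`ε → 0` gives it for `|φ|`. -/

open Real Set Filter Topology

theorem antitoneOn_exp_neg_mul_sub_integral {ψ ψ' h : ℝ → ℝ} {a b C : ℝ}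
    (hψ : ContinuousOn ψ (Icc a b)) (hψ' : ∀ x ∈ Ioo a b, HasDerivAt ψ (ψ' x) x)
    (hh : ContinuousOn h (Icc a b)) (hle : ∀ x ∈ Ioo a b, ψ' x ≤ C * ψ x + h x) :
    AntitoneOn (fun s => exp (-(C * s)) * ψ s - ∫ θ in a..s, exp (-(C * θ)) * h θ)
      (Icc a b) := by
  have hexp : Continuous fun s : ℝ => exp (-(C * s)) := by fun_prop
  have hkernel : ContinuousOn (fun θ => exp (-(C * θ)) * h θ) (Icc a b) :=
    hexp.continuousOn.mul hh
  have hprimitive : ContinuousOn (fun s => ∫ θ in a..s, exp (-(C * θ)) * h θ) (Icc a b) := by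
    rcases le_total a b with hab | hba
    · simpa [uIcc_of_le hab] using
        intervalIntegral.continuousOn_primitive_interval (μ := MeasureTheory.volume)
          (hkernel.integrableOn_Icc.mono_set (uIcc_of_le hab).subset)
    · exact (subsingleton_Icc_of_ge hba).continuousOn _
  refine antitoneOn_of_hasDerivWithinAt_nonpos (convex_Icc a b)
    ((hexp.continuousOn.mul hψ).sub hprimitive) (f' := fun x =>
      exp (-(C * x)) * (ψ' x - C * ψ x - h x)) (fun x hx => ?_) (fun x hx => ?_)
  · rw [interior_Icc] at hx
    have hmem : Icc a b ∈ 𝓝 x := Icc_mem_nhds hx.1 hx.2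
    have hint : HasDerivAt (fun s => ∫ θ in a..s, exp (-(C * θ)) * h θ)
        (exp (-(C * x)) * h x) x :=
      intervalIntegral.integral_hasDerivAt_right
        ((hkernel.mono (Icc_subset_Icc le_rfl hx.2.le)).intervalIntegrable_of_Icc hx.1.le)
        ((hkernel.mono Ioo_subset_Icc_self).stronglyMeasurableAtFilter isOpen_Ioo x hx)
        (hkernel.continuousAt hmem)
    have hexp' : HasDerivAt (fun s => exp (-(C * s))) (exp (-(C * x)) * -C) x := by
      simpa using ((hasDerivAt_id x).const_mul C).neg.exp
    exact (((hexp'.mul (hψ' x hx)).sub hint).congr_deriv (by ring)).hasDerivWithinAt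
  · rw [interior_Icc] at hx
    exact mul_nonpos_of_nonneg_of_nonpos (exp_pos _).le (by linarith [hle x hx])

theorem le_exp_mul_add_integral_of_hasDerivAt_le {ψ ψ' h : ℝ → ℝ} {a b C : ℝ}
    (hψ : ContinuousOn ψ (Icc a b)) (hψ' : ∀ x ∈ Ioo a b, HasDerivAt ψ (ψ' x) x)
    (hh : ContinuousOn h (Icc a b)) (hle : ∀ x ∈ Ioo a b, ψ' x ≤ C * ψ x + h x) :
    ∀ t ∈ Icc a b,
      ψ t ≤ exp (C * (t - a)) * ψ a + ∫ θ in a..t, exp (C * (t - θ)) * h θ := by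
  intro t ht
  have hFt := antitoneOn_exp_neg_mul_sub_integral hψ hψ' hh hle
    (left_mem_Icc.2 (ht.1.trans ht.2)) ht ht.1
  simp only [intervalIntegral.integral_same, sub_zero] at hFt
  have hfactor : ∀ θ, exp (C * t) * (exp (-(C * θ)) * h θ) = exp (C * (t - θ)) * h θ := by
    intro θ
    rw [← mul_assoc, ← exp_add]
    ring_nf
  calc ψ t = exp (C * t) * (exp (-(C * t)) * ψ t) := by
        rw [← mul_assoc, ← exp_add, add_neg_cancel, exp_zero, one_mul]
    _ ≤ exp (C * t) * (exp (-(C * a)) * ψ a + ∫ θ in a..t, exp (-(C * θ)) * h θ) := by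
        gcongr
        linarith
    _ = exp (C * (t - a)) * ψ a + ∫ θ in a..t, exp (C * (t - θ)) * h θ := by
        rw [mul_add, ← intervalIntegral.integral_const_mul, ← mul_assoc, ← exp_add]
        simp only [hfactor]
        ring_nf

theorem div_two_mul_le_of_le_two_mul_sq_add {C g φ ψ D : ℝ} (hC : 0 ≤ C) (hg : 0 ≤ g)
    (hψ : 0 < ψ) (hφψ : |φ| ≤ ψ) (hD : D ≤ 2 * C * (φ ^ 2 + g * φ)) :
    D / (2 * ψ) ≤ C * ψ + C * g := by
  have hsq : φ ^ 2 ≤ ψ ^ 2 := sq_le_sq' (abs_le.1 hφψ).1 (abs_le.1 hφψ).2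
  have hlin : g * φ ≤ g * ψ := mul_le_mul_of_nonneg_left ((le_abs_self φ).trans hφψ) hg
  rw [div_le_iff₀ (by positivity)]
  calc D ≤ 2 * C * (φ ^ 2 + g * φ) := hD
    _ ≤ 2 * C * (ψ ^ 2 + g * ψ) := by gcongr
    _ = (C * ψ + C * g) * (2 * ψ) := by ring

theorem sqrt_sq_add_sq_le_of_hasDerivWithinAt_sq_le {a b C ε : ℝ} {g φ D : ℝ → ℝ}
    (hε : ε ≠ 0) (hC : 0 ≤ C) (hg : ContinuousOn g (Icc a b))
    (hg0 : ∀ t ∈ Icc a b, 0 ≤ g t)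
    (hderiv : ∀ t ∈ Icc a b, HasDerivWithinAt (fun s => φ s ^ 2) (D t) (Icc a b) t)
    (hineq : ∀ t ∈ Icc a b, D t ≤ 2 * C * (φ t ^ 2 + g t * φ t)) :
    ∀ t ∈ Icc a b, √(φ t ^ 2 + ε ^ 2) ≤ exp (C * (t - a)) * √(φ a ^ 2 + ε ^ 2)
        + C * ∫ θ in a..t, exp (C * (t - θ)) * g θ := by
  have hpos : ∀ s, 0 < φ s ^ 2 + ε ^ 2 := fun s => by positivity
  have hψ' : ∀ x ∈ Icc a b, HasDerivWithinAt (fun s => √(φ s ^ 2 + ε ^ 2))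
      (D x / (2 * √(φ x ^ 2 + ε ^ 2))) (Icc a b) x := fun x hx =>
    ((hderiv x hx).add_const _).sqrt (hpos x).ne'
  intro t ht
  have := le_exp_mul_add_integral_of_hasDerivAt_le (h := fun θ => C * g θ)
    (fun x hx => (hψ' x hx).continuousWithinAt)
    (fun x hx => (hψ' x (Ioo_subset_Icc_self hx)).hasDerivAt (Icc_mem_nhds hx.1 hx.2))
    (continuousOn_const.mul hg)
    (fun x hx => div_two_mul_le_of_le_two_mul_sq_add hC (hg0 x (Ioo_subset_Icc_self hx))
      (sqrt_pos.2 (hpos x)) (abs_le_sqrt (le_add_of_nonneg_right (sq_nonneg ε)))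
      (hineq x (Ioo_subset_Icc_self hx))) t ht
  simpa only [mul_left_comm _ C, intervalIntegral.integral_const_mul] using this

theorem abs_le_exp_mul_add_integral_of_hasDerivWithinAt_sq_le {a b C : ℝ} {g φ D : ℝ → ℝ}
    (hC : 0 ≤ C) (hg : ContinuousOn g (Icc a b)) (hg0 : ∀ t ∈ Icc a b, 0 ≤ g t)
    (hderiv : ∀ t ∈ Icc a b, HasDerivWithinAt (fun s => φ s ^ 2) (D t) (Icc a b) t)
    (hineq : ∀ t ∈ Icc a b, D t ≤ 2 * C * (φ t ^ 2 + g t * φ t)) :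
    ∀ t ∈ Icc a b, |φ t| ≤ exp (C * (t - a)) * |φ a|
        + C * ∫ θ in a..t, exp (C * (t - θ)) * g θ := by
  intro t ht
  have hlim : ∀ s, Tendsto (fun ε => √(φ s ^ 2 + ε ^ 2)) (𝓝[≠] 0) (𝓝 |φ s|) := fun s => by
    have : Continuous fun ε => √(φ s ^ 2 + ε ^ 2) := by fun_prop
    simpa [sqrt_sq_eq_abs] using (this.tendsto 0).mono_left nhdsWithin_le_nhds
  refine le_of_tendsto_of_tendsto (hlim t) (((hlim a).const_mul _).add_const _) ?_
  filter_upwards [self_mem_nhdsWithin] with ε hε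
  exact sqrt_sq_add_sq_le_of_hasDerivWithinAt_sq_le hε hC hg hg0 hderiv hineq t ht

theorem stmt11_general (T C : ℝ) (hC : 0 ≤ C)
    (g φ D : ℝ → ℝ)
    (hg : ContinuousOn g (Icc 0 T)) (hg0 : ∀ t ∈ Icc (0:ℝ) T, 0 ≤ g t)
    (hφ0 : ∀ t ∈ Icc (0:ℝ) T, 0 ≤ φ t)
    (hderiv : ∀ t ∈ Icc (0:ℝ) T, HasDerivWithinAt (fun s => φ s ^ 2) (D t) (Icc 0 T) t)
    (hineq : ∀ t ∈ Icc (0:ℝ) T, D t ≤ 2 * C * (φ t ^ 2 + g t * φ t)) :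
    ∀ t ∈ Icc (0:ℝ) T,
      φ t ≤ Real.exp (C * t) * φ 0
        + C * ∫ θ in (0:ℝ)..t, Real.exp (C * (t - θ)) * g θ := by
  intro t ht
  have hbound := abs_le_exp_mul_add_integral_of_hasDerivWithinAt_sq_le hC hg hg0 hderiv hineq t ht
  rw [sub_zero, abs_of_nonneg (hφ0 0 (left_mem_Icc.2 (ht.1.trans ht.2)))] at hbound
  exact (le_abs_self _).trans hbound

/-- The regularized Gronwall argument deriving (4.11) from (4.10) in the proof of
Proposition 4.3: if `φ ≥ 0`, `φ²` is continuously differentiable on `[0,T]` (with derivative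
`D` continuous on `[0,T]`) and `(φ²)'(t) ≤ 2C·(φ(t)² + g(t)·φ(t))`, then
`φ(t) ≤ e^{Ct}·φ(0) + C·∫₀ᵗ e^{C(t−θ)}·g(θ) dθ`. -/
theorem stmt11 (T C : ℝ) (hT : 0 < T) (hC : 0 ≤ C)
    (g φ D : ℝ → ℝ)
    (hg : ContinuousOn g (Icc 0 T)) (hg0 : ∀ t ∈ Icc (0:ℝ) T, 0 ≤ g t)
    (hφ0 : ∀ t ∈ Icc (0:ℝ) T, 0 ≤ φ t)
    (hD : ContinuousOn D (Icc 0 T))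
    (hderiv : ∀ t ∈ Icc (0:ℝ) T, HasDerivWithinAt (fun s => φ s ^ 2) (D t) (Icc 0 T) t)
    (hineq : ∀ t ∈ Icc (0:ℝ) T, D t ≤ 2 * C * (φ t ^ 2 + g t * φ t)) :
    ∀ t ∈ Icc (0:ℝ) T,
      φ t ≤ Real.exp (C * t) * φ 0
        + C * ∫ θ in (0:ℝ)..t, Real.exp (C * (t - θ)) * g θ :=
  stmt11_general T C hC g φ D hg hg0 hφ0 hderiv hineq
end
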